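/- Let M be a nonempty multiset of positive integers with sum k', cardinality c, and in which j occurs with multiplicity a_j. Then for every natural number n with n ≥ k' - 1, the number of subsets S of {0, 1, …, n-1} whose multiset of lengths of maximal runs equals M satisfies: (that number) · ∏_j (a_j)! = ∏_{t=0}^{c-1} (n + 1 - k' - t). -/

import Mathlib

/-!
Write `f(n, M)` for the number of subsets of `{0, …, n-1}` with run-length multiset `M`. Every
finite `S ⊆ ℕ` is uniquely `[0, l) ∪ (T + l + 1)` with `l` the least number not in `S`, and the runs
of `S` are those of `T` plus one of length `l` if `l > 0`. Splitting off this first run gives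
`f(n, M) = f(n - 1, M) + ∑_{l ∈ M} f(n - l - 1, M - {l})`. As `∏ a_j!` for `M` is `a_l` times
that for `M - {l}`, and `∑_l a_l = c`, the normalised counts satisfy the recursion
`(x + 1)_c = x_c + c · x_(c-1)` of the falling factorials `x_c = ∏_{t<c} (x - t)` at
`x = n - k'`. The base case `n = k' - 1` holds because the runs of `S` have total length `|S| ≤ n`.
-/

/-- The multiset of lengths of the maximal runs (maximal sets of consecutive
integers) contained in a finite set `S` of natural numbers: for each `a ∈ S`
which starts a run (i.e. `a = 0` or `a - 1 ∉ S`), we record the length of the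
run starting at `a`, namely the number of `x ≥ a` with `[a, x] ⊆ S`. -/
def runLengths (S : Finset ℕ) : Multiset ℕ :=
  (S.filter fun a => a = 0 ∨ a - 1 ∉ S).val.map
    fun a => (S.filter fun x => a ≤ x ∧ Finset.Icc a x ⊆ S).card

open Finset

def runStarts (S : Finset ℕ) : Finset ℕ :=
  S.filter fun a => a = 0 ∨ a - 1 ∉ S

def runFrom (S : Finset ℕ) (a : ℕ) : Finset ℕ :=
  S.filter fun x => a ≤ x ∧ Icc a x ⊆ S

lemma runLengths_eq (S : Finset ℕ) :
    runLengths S = (runStarts S).val.map fun a => (runFrom S a).card :=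
  rfl

section Shift

variable (S : Finset ℕ) (k : ℕ)

lemma runStarts_map_addRight :
    runStarts (S.map (addRightEmbedding k)) = (runStarts S).map (addRightEmbedding k) := by
  rw [runStarts, runStarts, filter_map]
  congr 1
  refine filter_congr fun a _ => ?_
  change a + k = 0 ∨ a + k - 1 ∉ S.map (addRightEmbedding k) ↔ _
  rcases Nat.eq_zero_or_pos a with rfl | ha
  · simp only [zero_add, true_or, iff_true, mem_map, addRightEmbedding_apply, not_exists,
      not_and]
    exact k.eq_zero_or_pos.imp_right fun hk x _ => by omega
  · rw [show a + k - 1 = a - 1 + k by omega, ← addRightEmbedding_apply k (a - 1), mem_map']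
    simp only [Nat.add_eq_zero_iff, ha.ne', false_and]

lemma runFrom_map_addRight (a : ℕ) :
    runFrom (S.map (addRightEmbedding k)) (a + k) = (runFrom S a).map (addRightEmbedding k) := by
  rw [runFrom, runFrom, filter_map]
  congr 1
  refine filter_congr fun x _ => ?_
  change a + k ≤ x + k ∧ Icc (a + k) (x + k) ⊆ _ ↔ _
  rw [← map_add_right_Icc, map_subset_map, add_le_add_iff_right]

lemma runLengths_map_addRight : runLengths (S.map (addRightEmbedding k)) = runLengths S := by
  rw [runLengths_eq, runLengths_eq, runStarts_map_addRight, map_val, Multiset.map_map]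
  refine Multiset.map_congr rfl fun a _ => ?_
  rw [Function.comp_apply, addRightEmbedding_apply, runFrom_map_addRight, card_map]

end Shift

section Gap

variable {A B : Finset ℕ} {g : ℕ} (hA : ∀ x ∈ A, x < g) (hB : ∀ y ∈ B, g < y)
include hA hB

lemma runStarts_union_of_gap : runStarts (A ∪ B) = runStarts A ∪ runStarts B := by
  ext a
  simp only [runStarts, mem_union, mem_filter]
  grind

lemma runFrom_union_of_gap_left {a : ℕ} (ha : a ∈ A) : runFrom (A ∪ B) a = runFrom A a := by
  have hgA : g ∉ A := fun h => (hA g h).false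
  have hgB : g ∉ B := fun h => (hB g h).false
  ext x
  simp only [runFrom, mem_filter, mem_union, subset_iff, mem_Icc]
  grind

lemma runFrom_union_of_gap_right {a : ℕ} (ha : a ∈ B) : runFrom (A ∪ B) a = runFrom B a := by
  ext x
  simp only [runFrom, mem_filter, mem_union, subset_iff, mem_Icc]
  grind

lemma runLengths_union_of_gap : runLengths (A ∪ B) = runLengths A + runLengths B := by
  have hdisj : Disjoint (runStarts A) (runStarts B) :=
    disjoint_left.2 fun a ha hb =>
      (hA a (filter_subset _ _ ha)).asymm (hB a (filter_subset _ _ hb))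
  rw [runLengths_eq, runLengths_eq, runLengths_eq, runStarts_union_of_gap hA hB,
    ← disjUnion_eq_union _ _ hdisj, disjUnion_val, Multiset.map_add]
  congr 1
  · refine Multiset.map_congr rfl fun a ha => ?_
    rw [runFrom_union_of_gap_left hA hB (filter_subset _ _ ha)]
  · refine Multiset.map_congr rfl fun a ha => ?_
    rw [runFrom_union_of_gap_right hA hB (filter_subset _ _ ha)]

end Gap

lemma runLengths_empty : runLengths ∅ = 0 := rfl

lemma runLengths_range {l : ℕ} (hl : 0 < l) : runLengths (range l) = {l} := by
  have hstarts : runStarts (range l) = {0} := by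
    ext a
    simp only [runStarts, mem_filter, mem_range, mem_singleton]
    omega
  have hfrom : runFrom (range l) 0 = range l := by
    ext x
    simp only [runFrom, mem_filter, mem_range, subset_iff, mem_Icc]
    grind
  rw [runLengths_eq, hstarts, singleton_val, Multiset.map_singleton, hfrom, card_range]

def prependRun (l : ℕ) (T : Finset ℕ) : Finset ℕ :=
  range l ∪ T.map (addRightEmbedding (l + 1))

section PrependRun

variable {l : ℕ} {T : Finset ℕ}

lemma mem_prependRun {x : ℕ} : x ∈ prependRun l T ↔ x < l ∨ l < x ∧ x - (l + 1) ∈ T := by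
  simp only [prependRun, mem_union, mem_range, mem_map, addRightEmbedding_apply]
  constructor
  · rintro (h | ⟨y, hy, rfl⟩)
    · exact Or.inl h
    · exact Or.inr ⟨by omega, by rwa [Nat.add_sub_cancel]⟩
  · rintro (h | ⟨h, hx⟩)
    · exact Or.inl h
    · exact Or.inr ⟨_, hx, by omega⟩

lemma self_notMem_prependRun : l ∉ prependRun l T := by
  simp [mem_prependRun]

lemma add_mem_prependRun_iff {x : ℕ} : x + (l + 1) ∈ prependRun l T ↔ x ∈ T := by
  rw [mem_prependRun, Nat.add_sub_cancel]
  exact ⟨fun h => h.elim (fun h => by omega) And.right, fun h => Or.inr ⟨by omega, h⟩⟩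

lemma prependRun_inj {l' : ℕ} {T' : Finset ℕ} :
    prependRun l T = prependRun l' T' ↔ l = l' ∧ T = T' := by
  refine ⟨fun h => ?_, fun h => h.1 ▸ h.2 ▸ rfl⟩
  have hl : ∀ {l l' T T'}, prependRun l T = prependRun l' T' → l ≤ l' := fun h =>
    not_lt.1 fun hlt => self_notMem_prependRun (h ▸ mem_prependRun.2 (Or.inl hlt))
  obtain rfl : l = l' := (hl h).antisymm (hl h.symm)
  exact ⟨rfl, ext fun x => by rw [← add_mem_prependRun_iff, h, add_mem_prependRun_iff]⟩

lemma runLengths_prependRun :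
    runLengths (prependRun l T) = runLengths (range l) + runLengths T := by
  rw [prependRun, runLengths_union_of_gap (g := l), runLengths_map_addRight]
  · exact fun x hx => mem_range.1 hx
  · simp only [mem_map, addRightEmbedding_apply]
    rintro _ ⟨x, _, rfl⟩
    omega

lemma card_prependRun : (prependRun l T).card = l + T.card := by
  rw [prependRun, card_union_of_disjoint, card_range, card_map]
  simp only [disjoint_left, mem_range, mem_map, addRightEmbedding_apply]
  rintro _ hx ⟨y, _, rfl⟩
  omega

lemma prependRun_subset_range_iff {n : ℕ} :
    prependRun l T ⊆ range n ↔ l ≤ n ∧ T ⊆ range (n - l - 1) := by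
  simp only [subset_iff, mem_prependRun, mem_range]
  constructor
  · intro h
    refine ⟨?_, fun x hx => ?_⟩
    · rcases Nat.eq_zero_or_pos l with rfl | hl
      · exact n.zero_le
      · have := h (Or.inl (Nat.sub_one_lt_of_lt hl))
        omega
    · have := h (x := x + (l + 1)) (Or.inr ⟨by omega, by rwa [Nat.add_sub_cancel]⟩)
      omega
  · rintro ⟨hl, hT⟩ x (hx | ⟨hx, hxT⟩)
    · omega
    · have := hT hxT
      omega

end PrependRun

lemma exists_prependRun_eq (S : Finset ℕ) : ∃ l T, prependRun l T = S := by
  have hex : ∃ l, l ∉ S := Infinite.exists_notMem_finset S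
  refine ⟨Nat.find hex, S.preimage (· + (Nat.find hex + 1)) (add_left_injective _).injOn, ?_⟩
  ext x
  rw [mem_prependRun, mem_preimage]
  rcases lt_trichotomy x (Nat.find hex) with h | rfl | h
  · simpa [h] using Nat.find_min hex h
  · simpa using Nat.find_spec hex
  · simp only [h, not_lt_of_gt h, true_and, false_or, Nat.sub_add_cancel h]

lemma sum_runLengths_range (l : ℕ) : (runLengths (range l)).sum = l := by
  rcases Nat.eq_zero_or_pos l with rfl | hl
  · rfl
  · rw [runLengths_range hl, Multiset.sum_singleton]

lemma sum_runLengths (S : Finset ℕ) : (runLengths S).sum = S.card := by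
  -- `T` is no smaller than `S` when `l = 0`, so induct on a bound `n` for `S` instead.
  obtain ⟨n, hn⟩ := S.exists_nat_subset_range
  induction n using Nat.strong_induction_on generalizing S with
  | _ n ih =>
    obtain ⟨l, T, rfl⟩ := exists_prependRun_eq S
    obtain ⟨-, hT⟩ := prependRun_subset_range_iff.1 hn
    rw [runLengths_prependRun, card_prependRun, Multiset.sum_add, sum_runLengths_range]
    rcases T.eq_empty_or_nonempty with rfl | ⟨x, hx⟩
    · rfl
    · have := mem_range.1 (hT hx)
      rw [ih (n - l - 1) (by omega) T hT]

def runSets (n : ℕ) (M : Multiset ℕ) : Finset (Finset ℕ) :=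
  (range n).powerset.filter fun S => runLengths S = M

lemma mem_runSets {n : ℕ} {M : Multiset ℕ} {S : Finset ℕ} :
    S ∈ runSets n M ↔ S ⊆ range n ∧ runLengths S = M := by
  rw [runSets, mem_filter, mem_powerset]

lemma runSets_zero (n : ℕ) : runSets n 0 = {∅} := by
  ext S
  rw [mem_runSets, mem_singleton]
  constructor
  · rintro ⟨-, h⟩
    rw [← card_eq_zero, ← sum_runLengths, h, Multiset.sum_zero]
  · rintro rfl
    exact ⟨empty_subset _, runLengths_empty⟩

lemma runSets_eq_empty {n : ℕ} {M : Multiset ℕ} (h : n < M.sum) : runSets n M = ∅ := by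
  refine eq_empty_of_forall_notMem fun S hS => ?_
  obtain ⟨hsub, rfl⟩ := mem_runSets.1 hS
  have := card_le_card hsub
  rw [card_range, ← sum_runLengths] at this
  omega

lemma card_runSets_eq_sum (n : ℕ) (M : Multiset ℕ) :
    (runSets n M).card = ∑ l ∈ range (n + 1),
      ((range (n - l - 1)).powerset.filter fun T =>
        runLengths (range l) + runLengths T = M).card := by
  have hdecomp : runSets n M = (range (n + 1)).biUnion fun l =>
      ((range (n - l - 1)).powerset.filter fun T =>
        runLengths (range l) + runLengths T = M).image (prependRun l) := by
    ext S
    simp only [mem_runSets, mem_biUnion, mem_image, mem_filter, mem_powerset, mem_range,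
      Nat.lt_succ_iff]
    constructor
    · rintro ⟨hS, rfl⟩
      obtain ⟨l, T, rfl⟩ := exists_prependRun_eq S
      obtain ⟨hl, hT⟩ := prependRun_subset_range_iff.1 hS
      exact ⟨l, hl, T, ⟨hT, runLengths_prependRun.symm⟩, rfl⟩
    · rintro ⟨l, hl, T, ⟨hT, hM⟩, rfl⟩
      exact ⟨prependRun_subset_range_iff.2 ⟨hl, hT⟩, runLengths_prependRun.trans hM⟩
  rw [hdecomp, card_biUnion]
  · refine sum_congr rfl fun l _ => card_image_of_injective _ fun T T' h => ?_
    exact (prependRun_inj.1 h).2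
  · intro l _ l' _ hne
    simp only [Function.onFun, disjoint_left, mem_image]
    rintro _ ⟨T, _, rfl⟩ ⟨T', _, h⟩
    exact hne (prependRun_inj.1 h).1.symm

lemma Multiset.singleton_add_eq_iff {α : Type*} [DecidableEq α] {a : α} {s t : Multiset α} :
    {a} + s = t ↔ a ∈ t ∧ s = t.erase a := by
  constructor
  · rintro rfl
    simp
  · rintro ⟨h, rfl⟩
    rw [Multiset.singleton_add, Multiset.cons_erase h]

lemma card_runSets_rec {n : ℕ} {M : Multiset ℕ} (hpos : ∀ j ∈ M, 0 < j)
    (hle : ∀ j ∈ M, j ≤ n) :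
    (runSets n M).card =
      (runSets (n - 1) M).card + ∑ l ∈ M.toFinset, (runSets (n - l - 1) (M.erase l)).card := by
  rw [card_runSets_eq_sum, ← add_sum_erase _ _ (mem_range.2 n.succ_pos)]
  congr 1
  · simp only [range_zero, runLengths_empty, zero_add, Nat.sub_zero]
    rfl
  have hsub : M.toFinset ⊆ (range (n + 1)).erase 0 := fun l hl => by
    rw [Multiset.mem_toFinset] at hl
    exact mem_erase.2 ⟨(hpos l hl).ne', mem_range.2 (Nat.lt_succ_of_le (hle l hl))⟩
  rw [← sum_subset hsub]
  · refine sum_congr rfl fun l hl => ?_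
    rw [Multiset.mem_toFinset] at hl
    rw [runLengths_range (hpos l hl), runSets]
    simp_rw [Multiset.singleton_add_eq_iff, eq_true hl, true_and]
  · intro l hl hlM
    rw [Multiset.mem_toFinset] at hlM
    rw [runLengths_range (pos_of_ne_zero (ne_of_mem_erase hl)), card_eq_zero]
    exact filter_false_of_mem fun T _ h => hlM (Multiset.singleton_add_eq_iff.1 h).1

lemma Multiset.prod_factorial_count_eq {α R : Type*} [DecidableEq α] [CommSemiring R]
    {s : Multiset α} {a : α} (h : a ∈ s) :
    ∏ j ∈ s.toFinset, ((s.count j).factorial : R) =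
      s.count a * ∏ j ∈ (s.erase a).toFinset, (((s.erase a).count j).factorial : R) := by
  have hfac : ∀ j, ((s.count j).factorial : R) =
      (if a = j then (s.count a : R) else 1) * ((s.erase a).count j).factorial := by
    intro j
    split_ifs with hj
    · rw [← hj, Multiset.count_erase_self, ← Nat.cast_mul,
        Nat.mul_factorial_pred (Multiset.count_ne_zero.2 h)]
    · rw [Multiset.count_erase_of_ne (Ne.symm hj), one_mul]
  rw [prod_congr rfl fun j _ => hfac j, prod_mul_distrib, prod_ite_eq,
    if_pos (Multiset.mem_toFinset.2 h)]
  congr 1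
  refine (prod_subset (Multiset.toFinset_subset.2 (Multiset.erase_subset a s))
    fun j _ hj => ?_).symm
  rw [Multiset.count_eq_zero.2 (Multiset.mem_toFinset.not.1 hj), Nat.factorial_zero, Nat.cast_one]

lemma Multiset.card_le_sum_of_pos {s : Multiset ℕ} (h : ∀ j ∈ s, 0 < j) :
    Multiset.card s ≤ s.sum := by
  simpa using Multiset.card_nsmul_le_sum h

lemma prod_range_add_one_sub {R : Type*} [CommRing R] (x : R) (c : ℕ) :
    ∏ t ∈ range (c + 1), (x + 1 - t) =
      ∏ t ∈ range (c + 1), (x - t) + (c + 1) * ∏ t ∈ range c, (x - t) := by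
  rw [prod_range_succ', prod_range_succ]
  simp only [Nat.cast_add, Nat.cast_one, Nat.cast_zero, add_sub_add_right_eq_sub]
  ring

theorem card_runSets_mul_prod_factorial (n : ℕ) (M : Multiset ℕ) (hpos : ∀ j ∈ M, 0 < j)
    (hn : M.sum ≤ n + 1) :
    ((runSets n M).card : ℤ) * ∏ j ∈ M.toFinset, ((M.count j).factorial : ℤ) =
      ∏ t ∈ range (Multiset.card M), ((n : ℤ) + 1 - M.sum - t) := by
  induction n using Nat.strong_induction_on generalizing M with
  | _ n ih =>
  rcases eq_or_ne M 0 with rfl | hM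
  · simp [runSets_zero]
  obtain ⟨c, hc⟩ := Nat.exists_eq_add_one_of_ne_zero (Multiset.card_pos.2 hM).ne'
  have hc_le : c + 1 ≤ M.sum := hc ▸ Multiset.card_le_sum_of_pos hpos
  rcases hn.eq_or_lt with hn | hn
  · rw [runSets_eq_empty (by omega), hc, prod_range_succ']
    simp [hn]
  have hshift :
      ((runSets (n - 1) M).card : ℤ) * ∏ j ∈ M.toFinset, ((M.count j).factorial : ℤ) =
        ∏ t ∈ range (c + 1), ((n : ℤ) - M.sum - t) := by
    rw [ih (n - 1) (by omega) M hpos (by omega), hc]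
    exact prod_congr rfl fun t _ => by omega
  have herase : ∀ l ∈ M.toFinset,
      ((runSets (n - l - 1) (M.erase l)).card : ℤ) *
          ∏ j ∈ M.toFinset, ((M.count j).factorial : ℤ) =
        M.count l * ∏ t ∈ range c, ((n : ℤ) - M.sum - t) := by
    intro l hl
    rw [Multiset.mem_toFinset] at hl
    have hsum : l + (M.erase l).sum = M.sum := by
      rw [← Multiset.sum_cons, Multiset.cons_erase hl]
    have hcard : Multiset.card (M.erase l) = c := by
      rw [Multiset.card_erase_of_mem hl, hc, Nat.pred_succ]
    have hpos' : ∀ j ∈ M.erase l, 0 < j := fun j hj => hpos j (Multiset.mem_of_mem_erase hj)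
    have hc_le' : c ≤ (M.erase l).sum := hcard ▸ Multiset.card_le_sum_of_pos hpos'
    have hl_pos := hpos l hl
    rw [Multiset.prod_factorial_count_eq hl, mul_left_comm,
      ih (n - l - 1) (by omega) _ hpos' (by omega), hcard]
    congr 1
    exact prod_congr rfl fun t ht => by have := mem_range.1 ht; omega
  rw [card_runSets_rec hpos fun l hl => (Multiset.le_sum_of_mem hl).trans (by omega),
    Nat.cast_add, add_mul, hshift, Nat.cast_sum, sum_mul, sum_congr rfl herase, ← sum_mul,
    ← Nat.cast_sum, Multiset.toFinset_sum_count_eq, hc]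
  have hreindex : ∀ t : ℕ, (n : ℤ) + 1 - M.sum - t = ((n : ℤ) - M.sum) + 1 - t :=
    fun t => by ring
  simp only [hreindex, prod_range_add_one_sub, Nat.cast_add, Nat.cast_one]

theorem statement2_general (M : Multiset ℕ) (hpos : ∀ j ∈ M, 0 < j)
    (k' c : ℕ) (hk' : k' = M.sum) (hc : c = M.card)
    (n : ℕ) (hn : k' - 1 ≤ n) :
    ((((Finset.range n).powerset.filter fun S => runLengths S = M).card : ℤ) *
        ∏ j ∈ M.toFinset, ((M.count j).factorial : ℤ)) =
      ∏ t ∈ Finset.range c, ((n : ℤ) + 1 - (k' : ℤ) - (t : ℤ)) := by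
  subst hk' hc
  exact card_runSets_mul_prod_factorial n M hpos (by omega)

/-- Let `M` be a nonempty multiset of positive integers with sum
`k'` and cardinality `c`, in which `j` occurs with multiplicity `a_j = M.count j`.
For `n ≥ k' - 1`, the number of subsets of `{0, …, n-1}` whose multiset of maximal
run lengths is `M`, multiplied by `∏_j (a_j)!`, equals `∏_{t<c} (n + 1 - k' - t)`. -/
theorem statement2 (M : Multiset ℕ) (hM : M ≠ 0) (hpos : ∀ j ∈ M, 0 < j)
    (k' c : ℕ) (hk' : k' = M.sum) (hc : c = M.card)
    (n : ℕ) (hn : k' - 1 ≤ n) :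
    ((((Finset.range n).powerset.filter fun S => runLengths S = M).card : ℤ) *
        ∏ j ∈ M.toFinset, ((M.count j).factorial : ℤ)) =
      ∏ t ∈ Finset.range c, ((n : ℤ) + 1 - (k' : ℤ) - (t : ℤ)) :=
  statement2_general M hpos k' c hk' hc n hn
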